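/- There is no KbiG model N=(U,S,e) on a crisp frame with finite U such that e(∼∼(p → ◇p) ∧ ∼∼(p ⧀ ◇p), s) = 1 for every s ∈ U. (Hence the formula ∼∼(p → ◇p) ∧ ∼∼(p ⧀ ◇p) is globally satisfiable on an infinite crisp model but on no finite one, so the natural filtration constructions fail for KbiG.) -/

import Mathlib

/- Truth values: the real unit interval [0,1] with its complete lattice structure
   (so `sInf ∅ = 1` and `sSup ∅ = 0`). -/
instance : Fact ((0:ℝ) ≤ 1) := ⟨zero_le_one⟩

abbrev TV : Type := unitInterval

/-- Gödel implication: `a →G b = 1` if `a ≤ b`, else `b`. -/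
noncomputable def gimp (a b : TV) : TV := if a ≤ b then 1 else b

/-- Gödel coimplication: `a ⧀G b = 0` if `a ≤ b`, else `a`. -/
noncomputable def gcoimp (a b : TV) : TV := if a ≤ b then 0 else a

/-- ¬-free formulas: the language `biL_{□,◇}` over the countable variable set `ℕ`. -/
inductive FormulaB : Type
  | var : ℕ → FormulaB
  | and : FormulaB → FormulaB → FormulaB
  | or : FormulaB → FormulaB → FormulaB
  | imp : FormulaB → FormulaB → FormulaB
  | coimp : FormulaB → FormulaB → FormulaB
  | box : FormulaB → FormulaB
  | dia : FormulaB → FormulaB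

/-- KbiG valuation on a crisp frame `(W, R)` (`inf ∅ = 1`, `sup ∅ = 0`). -/
noncomputable def bval {W : Type} (R : W → W → Prop) (v : ℕ → W → TV) :
    FormulaB → W → TV
  | .var p, w => v p w
  | .and φ ψ, w => bval R v φ w ⊓ bval R v ψ w
  | .or φ ψ, w => bval R v φ w ⊔ bval R v ψ w
  | .imp φ ψ, w => gimp (bval R v φ w) (bval R v ψ w)
  | .coimp φ ψ, w => gcoimp (bval R v φ w) (bval R v ψ w)
  | .box φ, w => sInf ((fun w' => bval R v φ w') '' {w' | R w w'})
  | .dia φ, w => sSup ((fun w' => bval R v φ w') '' {w' | R w w'})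

/-- `𝟏 := p → p`. -/
def bone : FormulaB := .imp (.var 0) (.var 0)

/-- `𝟎 := p ⧀ p`. -/
def bzero : FormulaB := .coimp (.var 0) (.var 0)

/-- Gödel negation `∼φ := φ → 𝟎`. -/
def bnegG (φ : FormulaB) : FormulaB := .imp φ bzero

/-- Baaz delta `Δτ := ∼(𝟏 ⧀ τ)`. -/
def bDelta (τ : FormulaB) : FormulaB := bnegG (.coimp bone τ)

/-- The formula `𝟏 ⧀ ◇((p ⧀ q) ∧ q)` with `p := var 0`, `q := var 1`. -/
def phiFin : FormulaB := .coimp bone (.dia (.and (.coimp (.var 0) (.var 1)) (.var 1)))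

/-- `φ^≤ := ∼∼(p → ◇p)`. -/
def phiLe : FormulaB := bnegG (bnegG (.imp (.var 0) (.dia (.var 0))))

/-- `φ^> := ∼∼(p ⧀ ◇p)`. -/
def phiGt : FormulaB := bnegG (bnegG (.coimp (.var 0) (.dia (.var 0))))

/-! The formula forces, at every world, a successor where `p` is strictly smaller: `∼∼(p ⧀ ◇p)`
says `◇p < p`, and `∼∼(p → ◇p)` then says `◇p > 0`, so the successor set is nonempty. A world
where `p` is minimal, which exists when there are finitely many worlds, has no such successor. -/

lemma unitInterval.le_zero_iff {x : unitInterval} : x ≤ 0 ↔ x = 0 :=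
  ⟨fun h => le_antisymm h x.2.1, fun h => h.le⟩

lemma gimp_ne_zero_iff {a b : TV} : gimp a b ≠ 0 ↔ a ≤ b ∨ b ≠ 0 := by
  unfold gimp
  split_ifs with h <;> simp [h]

lemma gcoimp_ne_zero_iff {a b : TV} : gcoimp a b ≠ 0 ↔ b < a := by
  unfold gcoimp
  split_ifs with h
  · simpa using h
  · exact iff_of_true (fun ha => h (ha ▸ b.2.1)) (not_le.mp h)

section bval

variable {W : Type} (R : W → W → Prop) (v : ℕ → W → TV)

lemma bval_bzero (w : W) : bval R v bzero w = 0 := by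
  simp [bval, bzero, gcoimp]

lemma bval_bnegG (φ : FormulaB) (w : W) :
    bval R v (bnegG φ) w = if bval R v φ w = 0 then 1 else 0 := by
  simp only [bnegG, bval, bval_bzero, gimp, unitInterval.le_zero_iff]

lemma bval_bnegG_bnegG_eq_one_iff (φ : FormulaB) (w : W) :
    bval R v (bnegG (bnegG φ)) w = 1 ↔ bval R v φ w ≠ 0 := by
  by_cases h : bval R v φ w = 0 <;> simp [bval_bnegG, h]

lemma exists_rel_lt_of_bval_phiLe_and_phiGt {w : W} (h : bval R v (.and phiLe phiGt) w = 1) :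
    ∃ t, R w t ∧ v 0 t < v 0 w := by
  obtain ⟨hLe, hGt⟩ : bval R v phiLe w = 1 ∧ bval R v phiGt w = 1 := inf_eq_top_iff.mp h
  rw [phiLe, bval_bnegG_bnegG_eq_one_iff] at hLe
  rw [phiGt, bval_bnegG_bnegG_eq_one_iff] at hGt
  simp only [bval, gimp_ne_zero_iff, gcoimp_ne_zero_iff] at hLe hGt
  have hdia_ne : sSup ((fun t => v 0 t) '' {t | R w t}) ≠ 0 := hLe.resolve_left hGt.not_ge
  obtain ⟨_, ⟨t, hwt, rfl⟩⟩ : ((fun t => v 0 t) '' {t | R w t}).Nonempty :=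
    Set.nonempty_iff_ne_empty.mpr fun hempty => hdia_ne (by rw [hempty, sSup_empty]; rfl)
  exact ⟨t, hwt, (le_sSup (Set.mem_image_of_mem _ hwt)).trans_lt hGt⟩

end bval

/-- no KbiG model on a crisp frame with finitely many worlds satisfies
`∼∼(p → ◇p) ∧ ∼∼(p ⧀ ◇p)` (to degree 1) at every world. -/
theorem stmt9 :
    ¬ ∃ (U : Type) (_ : Nonempty U) (_ : Finite U) (S : U → U → Prop) (e : ℕ → U → TV),
      ∀ s : U, bval S e (.and phiLe phiGt) s = 1 := by
  rintro ⟨U, _, _, S, e, h⟩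
  obtain ⟨s, hs_min⟩ := Finite.exists_min (e 0)
  obtain ⟨t, -, hts⟩ := exists_rel_lt_of_bval_phiLe_and_phiGt S e (h s)
  exact (hs_min t).not_gt hts
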